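/- arXiv:1505.02528 — 5 statements merged into one kernel-verified Lean document; each statement's English description precedes it below -/
import Mathlib

section
/- Let m be even and q a positive integer. If the m-th order n-dimensional Hankel tensor H_m generated by h ∈ ℝ^{m(n-1)+1} is positive semi-definite (i.e., H_m x^m ≥ 0 for all x ∈ ℝ^n), then the (qm)-th order k-dimensional Hankel tensor H_{qm} with the same generating vector h, where n = q(k-1)+1, is also positive semi-definite. -/
/-!
Let `x = y^{∗q}` be the `q`-fold self-convolution of `y ∈ ℝ^k`; it lives in `ℝ^n` because
`n = q(k-1)+1`. Since convolution is associative, `(y^{∗q})^{∗m} = y^{∗qm}`, so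
`H_{qm} y^{qm} = hᵀ y^{∗qm} = hᵀ x^{∗m} = H_m x^m ≥ 0`. Concretely, both forms are the same
sum over `m × q` arrays of indices of `y`: grouping each row of the array by its index sum gives
the form of `H_m` at `x`, and reading the array as one index tuple of length `qm` gives that of
`H_{qm}`.
-/

open Finset

theorem Finset.sum_mul_prod_sum_fiber {ι α β R : Type*} [Fintype ι] [DecidableEq ι]
    [Fintype α] [DecidableEq α] [Fintype β] [CommSemiring R]
    (g : β → α) (w : β → R) (F : (ι → α) → R) :
    ∑ i : ι → α, F i * ∏ j, ∑ b with g b = i j, w b = ∑ T : ι → β, F (g ∘ T) * ∏ j, w (T j) := by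
  calc ∑ i : ι → α, F i * ∏ j, ∑ b with g b = i j, w b
      = ∑ i : ι → α, ∑ T with g ∘ T = i, F (g ∘ T) * ∏ j, w (T j) := by
        refine sum_congr rfl fun i _ => ?_
        rw [prod_univ_sum, mul_sum]
        refine sum_congr ?_ fun T hT => ?_
        · ext T
          simp [funext_iff]
        · rw [(mem_filter.1 hT).2]
    _ = ∑ T : ι → β, F (g ∘ T) * ∏ j, w (T j) := sum_fiberwise _ _ _

/-- The form `H xᵐ` of the Hankel tensor with generating vector `h`; the order `m` is the
cardinality of the index type `ι`. -/
def hankelForm (ι : Type*) [Fintype ι] [DecidableEq ι] {n : ℕ} (h : ℕ → ℝ) (x : Fin n → ℝ) : ℝ :=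
  ∑ i : ι → Fin n, h (∑ j, (i j : ℕ)) * ∏ j, x (i j)

section hankelForm

variable {ι κ : Type*} [Fintype ι] [DecidableEq ι] [Fintype κ] [DecidableEq κ] {n : ℕ} (h : ℕ → ℝ)

theorem hankelForm_congr (e : ι ≃ κ) (x : Fin n → ℝ) :
    hankelForm ι h x = hankelForm κ h x := by
  unfold hankelForm
  refine Fintype.sum_equiv (e.arrowCongr (Equiv.refl _)) _ _ fun i => ?_
  simp only [Equiv.arrowCongr_apply, Equiv.coe_refl, Function.comp_apply, id_eq,
    e.symm.sum_comp (fun j => (i j : ℕ)), e.symm.prod_comp (fun j => x (i j))]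

theorem hankelForm_prod (y : Fin n → ℝ) :
    hankelForm (ι × κ) h y =
      ∑ T : ι → κ → Fin n, h (∑ j, ∑ l, (T j l : ℕ)) * ∏ j, ∏ l, y (T j l) := by
  unfold hankelForm
  refine Fintype.sum_equiv (Equiv.curry ι κ (Fin n)) _ _ fun i => ?_
  rw [Fintype.sum_prod_type, Fintype.prod_prod_type]
  rfl

theorem hankelForm_sum_fiber {β : Type*} [Fintype β] (g : β → Fin n) (w : β → ℝ) :
    hankelForm ι h (fun s => ∑ b with g b = s, w b) =
      ∑ T : ι → β, h (∑ j, (g (T j) : ℕ)) * ∏ j, w (T j) :=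
  sum_mul_prod_sum_fiber g w fun i => h (∑ j, (i j : ℕ))

end hankelForm

theorem stmt4_general (m q k n : ℕ)
    (hn : n = q * (k - 1) + 1) (h : ℕ → ℝ)
    (hpsd : ∀ x : Fin n → ℝ,
      0 ≤ ∑ i : Fin m → Fin n, h (∑ j, (i j : ℕ)) * ∏ j, x (i j)) :
    ∀ y : Fin k → ℝ,
      0 ≤ ∑ i : Fin (q * m) → Fin k, h (∑ j, (i j : ℕ)) * ∏ j, y (i j) := by
  intro y
  have sum_lt : ∀ t : Fin q → Fin k, ∑ l, (t l : ℕ) < n := fun t => by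
    have : ∑ l, (t l : ℕ) ≤ ∑ _l : Fin q, (k - 1) :=
      sum_le_sum fun l _ => Nat.le_sub_one_of_lt (t l).isLt
    simp only [sum_const, card_univ, Fintype.card_fin, smul_eq_mul] at this
    omega
  let indexSum : (Fin q → Fin k) → Fin n := fun t => ⟨∑ l, (t l : ℕ), sum_lt t⟩
  let x : Fin n → ℝ := fun s => ∑ t with indexSum t = s, ∏ l, y (t l)
  calc 0 ≤ hankelForm (Fin m) h x := hpsd x
    _ = ∑ T : Fin m → Fin q → Fin k, h (∑ j, (indexSum (T j) : ℕ)) * ∏ j, ∏ l, y (T j l) :=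
      hankelForm_sum_fiber h indexSum _
    _ = hankelForm (Fin m × Fin q) h y := (hankelForm_prod h y).symm
    _ = hankelForm (Fin (q * m)) h y :=
      hankelForm_congr h (finProdFinEquiv.trans (finCongr (mul_comm m q))) y

theorem stmt4 (m q k n : ℕ) (hme : Even m) (hm : 0 < m) (hq : 0 < q) (hk : 0 < k)
    (hn : n = q * (k - 1) + 1) (h : ℕ → ℝ)
    (hpsd : ∀ x : Fin n → ℝ,
      0 ≤ ∑ i : Fin m → Fin n, h (∑ j, (i j : ℕ)) * ∏ j, x (i j)) :
    ∀ y : Fin k → ℝ,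
      0 ≤ ∑ i : Fin (q * m) → Fin k, h (∑ j, (i j : ℕ)) * ∏ j, y (i j) :=
  stmt4_general m q k n hn h hpsd
end

section
/- Let A be a real symmetric positive semi-definite n×n matrix of rank r, and u a nonzero vector in the range of A. Then there exists a unique α > 0 such that A − α u uᵀ is positive semi-definite of rank r − 1; explicitly, α = (uᵀ A⁺ u)⁻¹ where A⁺ is the Moore–Penrose pseudoinverse of A. -/
/-!
Write `u = A w`. For any scalar `c`, a vector `x` is killed by `A - c u uᵀ` iff
`A x = c (uᵀx) u`, and `uᵀx = wᵀA x` by symmetry. So either `x ∈ ker A`, or `c · wᵀA w = 1` and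
`x` differs from a multiple of `w` by an element of `ker A`. Hence `c = (wᵀA w)⁻¹` is the only
value for which the kernel grows, and it grows by exactly the line through `w`: by rank–nullity
it is the only update that lowers the rank, and it lowers it by one. That update is positive
semidefinite by Cauchy–Schwarz for the form `A`: `(uᵀx)² = (wᵀA x)² ≤ (wᵀA w)(xᵀA x)`.
Finally `uᵀB u = wᵀA B A w = wᵀA w` for every pseudoinverse `B`.
-/

open Matrix

/-- `B` is a Moore–Penrose pseudoinverse of `A`. -/
def IsMoorePenroseInv {n : ℕ} (A B : Matrix (Fin n) (Fin n) ℝ) : Prop :=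
  A * B * A = A ∧ B * A * B = B ∧ (A * B)ᵀ = A * B ∧ (B * A)ᵀ = B * A

namespace Matrix

section CommSemiring

variable {R m : Type*} [CommSemiring R] [Fintype m] {A : Matrix m m R}

theorem IsSymm.mulVec_dotProduct (hA : A.IsSymm) (w x : m → R) :
    A *ᵥ w ⬝ᵥ x = w ⬝ᵥ A *ᵥ x := by
  rw [dotProduct_mulVec, ← vecMul_transpose, hA.eq]

theorem IsSymm.mulVec_dotProduct_mulVec_mulVec {B : Matrix m m R} (hA : A.IsSymm)
    (hB : A * B * A = A) (w : m → R) :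
    A *ᵥ w ⬝ᵥ B *ᵥ A *ᵥ w = w ⬝ᵥ A *ᵥ w := by
  rw [hA.mulVec_dotProduct, mulVec_mulVec, mulVec_mulVec, hB]

end CommSemiring

section Field

variable {K m : Type*} [Field K]

theorem rank_add_finrank_ker_mulVecLin {n : Type*} [Fintype n] (M : Matrix m n K) :
    M.rank + Module.finrank K (LinearMap.ker M.mulVecLin) = Fintype.card n := by
  rw [rank]
  simpa using LinearMap.finrank_range_add_finrank_ker M.mulVecLin

variable [Fintype m]

theorem sub_smul_vecMulVec_self_mulVec_eq_zero_iff (A : Matrix m m K) (c : K) (u x : m → K) :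
    (A - c • vecMulVec u u) *ᵥ x = 0 ↔ A *ᵥ x = (c * (u ⬝ᵥ x)) • u := by
  rw [sub_mulVec, smul_mulVec, vecMulVec_mulVec, op_smul_eq_smul, sub_eq_zero, smul_smul]

variable {A : Matrix m m K} (hA : A.IsSymm) (w : m → K)
include hA

theorem IsSymm.ker_le_ker_sub_smul_vecMulVec (c : K) :
    LinearMap.ker A.mulVecLin ≤
      LinearMap.ker (A - c • vecMulVec (A *ᵥ w) (A *ᵥ w)).mulVecLin := by
  intro x hx
  rw [LinearMap.mem_ker, mulVecLin_apply] at hx ⊢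
  rw [sub_smul_vecMulVec_self_mulVec_eq_zero_iff, hA.mulVec_dotProduct, hx]
  simp

theorem IsSymm.ker_sub_smul_vecMulVec_of_mul_ne_one {c : K} (hc : c * (w ⬝ᵥ A *ᵥ w) ≠ 1) :
    LinearMap.ker (A - c • vecMulVec (A *ᵥ w) (A *ᵥ w)).mulVecLin = LinearMap.ker A.mulVecLin := by
  refine le_antisymm (fun x hx => ?_) (hA.ker_le_ker_sub_smul_vecMulVec w c)
  rw [LinearMap.mem_ker, mulVecLin_apply, sub_smul_vecMulVec_self_mulVec_eq_zero_iff] at hx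
  have hux : A *ᵥ w ⬝ᵥ x = 0 := by
    have h := hA.mulVec_dotProduct w x
    rw [hx, dotProduct_smul, smul_eq_mul] at h
    by_contra hne
    exact hc (mul_left_cancel₀ hne (by linear_combination -h))
  rw [LinearMap.mem_ker, mulVecLin_apply, hx, hux, mul_zero, zero_smul]

theorem IsSymm.ker_sub_inv_smul_vecMulVec (ht : w ⬝ᵥ A *ᵥ w ≠ 0) :
    LinearMap.ker (A - (w ⬝ᵥ A *ᵥ w)⁻¹ • vecMulVec (A *ᵥ w) (A *ᵥ w)).mulVecLin =
      LinearMap.ker A.mulVecLin ⊔ Submodule.span K {w} := by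
  refine le_antisymm (fun x hx => ?_) (sup_le (hA.ker_le_ker_sub_smul_vecMulVec w _) ?_)
  · rw [LinearMap.mem_ker, mulVecLin_apply, sub_smul_vecMulVec_self_mulVec_eq_zero_iff] at hx
    set s := (w ⬝ᵥ A *ᵥ w)⁻¹ * (A *ᵥ w ⬝ᵥ x)
    have hker : x - s • w ∈ LinearMap.ker A.mulVecLin := by
      rw [LinearMap.mem_ker, mulVecLin_apply, mulVec_sub, mulVec_smul, hx, sub_self]
    simpa using Submodule.add_mem_sup hker
      (Submodule.smul_mem _ s (Submodule.mem_span_singleton_self w))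
  · rw [Submodule.span_singleton_le_iff_mem, LinearMap.mem_ker, mulVecLin_apply,
      sub_smul_vecMulVec_self_mulVec_eq_zero_iff, dotProduct_comm (A *ᵥ w), inv_mul_cancel₀ ht,
      one_smul]

theorem IsSymm.rank_sub_smul_vecMulVec_of_mul_ne_one {c : K} (hc : c * (w ⬝ᵥ A *ᵥ w) ≠ 1) :
    (A - c • vecMulVec (A *ᵥ w) (A *ᵥ w)).rank = A.rank := by
  have h := rank_add_finrank_ker_mulVecLin (A - c • vecMulVec (A *ᵥ w) (A *ᵥ w))
  rw [hA.ker_sub_smul_vecMulVec_of_mul_ne_one w hc] at h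
  have := rank_add_finrank_ker_mulVecLin A
  omega

theorem IsSymm.rank_sub_inv_smul_vecMulVec_add_one (ht : w ⬝ᵥ A *ᵥ w ≠ 0) :
    (A - (w ⬝ᵥ A *ᵥ w)⁻¹ • vecMulVec (A *ᵥ w) (A *ᵥ w)).rank + 1 = A.rank := by
  have hw : w ∉ LinearMap.ker A.mulVecLin := fun h => ht <| by
    rw [LinearMap.mem_ker, mulVecLin_apply] at h
    rw [h, dotProduct_zero]
  have h := rank_add_finrank_ker_mulVecLin
    (A - (w ⬝ᵥ A *ᵥ w)⁻¹ • vecMulVec (A *ᵥ w) (A *ᵥ w))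
  rw [hA.ker_sub_inv_smul_vecMulVec w ht, Submodule.finrank_sup_span_singleton hw] at h
  have := rank_add_finrank_ker_mulVecLin A
  omega

theorem IsSymm.eq_inv_of_rank_sub_smul_vecMulVec_ne {c : K}
    (hc : (A - c • vecMulVec (A *ᵥ w) (A *ᵥ w)).rank ≠ A.rank) : c = (w ⬝ᵥ A *ᵥ w)⁻¹ :=
  eq_inv_of_mul_eq_one_left <| by_contra fun h => hc (hA.rank_sub_smul_vecMulVec_of_mul_ne_one w h)

end Field

section Real

variable {m : Type*} [Fintype m] {A : Matrix m m ℝ}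

theorem PosSemidef.dotProduct_mulVec_mul_le (hA : A.PosSemidef) (x y : m → ℝ) :
    (x ⬝ᵥ A *ᵥ y) * (y ⬝ᵥ A *ᵥ x) ≤ (x ⬝ᵥ A *ᵥ x) * (y ⬝ᵥ A *ᵥ y) := by
  classical
  simpa only [toLinearMap₂'_apply'] using
    LinearMap.BilinForm.apply_mul_apply_le_of_forall_zero_le (toLinearMap₂' ℝ A)
      (fun z => by simpa [toLinearMap₂'_apply'] using hA.dotProduct_mulVec_nonneg z) x y

theorem PosSemidef.dotProduct_mulVec_pos_of_mulVec_ne_zero (hA : A.PosSemidef) {w : m → ℝ}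
    (hw : A *ᵥ w ≠ 0) : 0 < w ⬝ᵥ A *ᵥ w := by
  have hnonneg : 0 ≤ w ⬝ᵥ A *ᵥ w := by simpa using hA.dotProduct_mulVec_nonneg w
  refine hnonneg.lt_of_ne fun h => hw ?_
  simpa using (hA.dotProduct_mulVec_zero_iff w).1 (by simpa using h.symm)

theorem PosSemidef.sub_inv_smul_vecMulVec (hA : A.PosSemidef) (w : m → ℝ) :
    (A - (w ⬝ᵥ A *ᵥ w)⁻¹ • vecMulVec (A *ᵥ w) (A *ᵥ w)).PosSemidef := by
  have hsymm : A.IsSymm := isHermitian_iff_isSymm.1 hA.isHermitian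
  have hherm : (A - (w ⬝ᵥ A *ᵥ w)⁻¹ • vecMulVec (A *ᵥ w) (A *ᵥ w)).IsHermitian :=
    isHermitian_iff_isSymm.2 <| hsymm.sub <| (IsSymm.ext fun _ _ => mul_comm _ _).smul _
  refine .of_dotProduct_mulVec_nonneg hherm fun x => ?_
  have hcs := hA.dotProduct_mulVec_mul_le w x
  rw [← hsymm.mulVec_dotProduct] at hcs
  rw [star_trivial, sub_mulVec, smul_mulVec, vecMulVec_mulVec, op_smul_eq_smul, dotProduct_sub,
    dotProduct_smul, dotProduct_smul, smul_eq_mul, smul_eq_mul, sub_nonneg]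
  have hxAx : 0 ≤ x ⬝ᵥ A *ᵥ x := by simpa using hA.dotProduct_mulVec_nonneg x
  rcases (show 0 ≤ w ⬝ᵥ A *ᵥ w by simpa using hA.dotProduct_mulVec_nonneg w).eq_or_lt
    with h0 | hpos
  · simpa [← h0] using hxAx
  · rwa [inv_mul_le_iff₀ hpos]

end Real

end Matrix

theorem stmt8 (n r : ℕ) (A : Matrix (Fin n) (Fin n) ℝ)
    (hA : A.PosSemidef) (hrank : A.rank = r)
    (u : Fin n → ℝ) (hu0 : u ≠ 0) (hu : ∃ w, A *ᵥ w = u) :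
    (∃! α : ℝ, 0 < α ∧ (A - α • Matrix.vecMulVec u u).PosSemidef ∧
      (A - α • Matrix.vecMulVec u u).rank = r - 1) ∧
    ∀ B : Matrix (Fin n) (Fin n) ℝ, IsMoorePenroseInv A B →
      0 < (u ⬝ᵥ B *ᵥ u)⁻¹ ∧
      (A - (u ⬝ᵥ B *ᵥ u)⁻¹ • Matrix.vecMulVec u u).PosSemidef ∧
      (A - (u ⬝ᵥ B *ᵥ u)⁻¹ • Matrix.vecMulVec u u).rank = r - 1 := by
  obtain ⟨w, rfl⟩ := hu
  have hsymm : A.IsSymm := isHermitian_iff_isSymm.1 hA.isHermitian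
  have ht := hA.dotProduct_mulVec_pos_of_mulVec_ne_zero hu0
  have hdrop := hsymm.rank_sub_inv_smul_vecMulVec_add_one w ht.ne'
  have hgood : 0 < (w ⬝ᵥ A *ᵥ w)⁻¹ ∧
      (A - (w ⬝ᵥ A *ᵥ w)⁻¹ • vecMulVec (A *ᵥ w) (A *ᵥ w)).PosSemidef ∧
      (A - (w ⬝ᵥ A *ᵥ w)⁻¹ • vecMulVec (A *ᵥ w) (A *ᵥ w)).rank = r - 1 :=
    ⟨inv_pos.2 ht, hA.sub_inv_smul_vecMulVec w, by omega⟩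
  refine ⟨⟨_, hgood, fun c ⟨_, _, hc⟩ => hsymm.eq_inv_of_rank_sub_smul_vecMulVec_ne w ?_⟩,
    fun B hB => ?_⟩
  · omega
  · rwa [hsymm.mulVec_dotProduct_mulVec_mulVec hB.1]
end

section
/- Let H ∈ ℝ^{n×n} be a positive semi-definite Hankel matrix of rank r whose last column H(:,n) is a linear combination of the first n−1 columns. Then the leading r×r principal submatrix H(1:r,1:r) is positive definite. -/
/-!
Suppose `x ≠ 0` had `xᵀ H_r x = 0`. Padding `x` by zeros gives a kernel vector of `H` (which is
positive semidefinite) whose last nonzero entry sits at some index `k < r`. Since `H` is a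
symmetric Hankel matrix whose last column depends on the others, shifting a kernel vector one
step down keeps it in the kernel as long as its last entry vanishes. The shifts of the padded
vector are kernel vectors with last nonzero entries at `k, k + 1, …, n - 1`, so every column from
the `k`-th on is a combination of the earlier ones and `rank H ≤ k < r`.
-/

open Matrix Submodule

def IsLastNonzero {R : Type*} [Zero R] {n : ℕ} (v : Fin n → R) (k : Fin n) : Prop :=
  v k ≠ 0 ∧ ∀ i, k < i → v i = 0

section IsLastNonzero

variable {R : Type*} [Zero R]

lemma exists_isLastNonzero {n : ℕ} {v : Fin n → R} (hv : v ≠ 0) : ∃ k, IsLastNonzero v k := by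
  classical
  obtain ⟨k, hk, hmax⟩ := (Finset.univ.filter (v · ≠ 0)).exists_max_image id
    (by simpa [Finset.Nonempty, funext_iff] using hv)
  exact ⟨k, (Finset.mem_filter.1 hk).2, fun i hki => by_contra fun hi =>
    (hmax i (by simpa using hi)).not_gt hki⟩

lemma IsLastNonzero.append_zero {r s : ℕ} {x : Fin r → R} {k : Fin r} (hk : IsLastNonzero x k) :
    IsLastNonzero (Fin.append x (0 : Fin s → R)) (Fin.castAdd s k) := by
  refine ⟨by simpa using hk.1, fun i hki => ?_⟩
  induction i using Fin.addCases with
  | left i => rw [Fin.append_left]; exact hk.2 i hki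
  | right i => simp

lemma IsLastNonzero.cons_init {m : ℕ} {v : Fin (m + 1) → R} {j : Fin m}
    (hj : IsLastNonzero v j.castSucc) : IsLastNonzero (Fin.cons 0 (Fin.init v)) j.succ := by
  refine ⟨by simpa [Fin.init] using hj.1, fun i hji => ?_⟩
  induction i using Fin.cases with
  | zero => rfl
  | succ i => simpa [Fin.init] using hj.2 i.castSucc (by simpa using hji)

end IsLastNonzero

lemma append_zero_dotProduct_mulVec {R : Type*} [NonUnitalNonAssocSemiring R] {r s : ℕ}
    (M : Matrix (Fin (r + s)) (Fin (r + s)) R) (x : Fin r → R) :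
    Fin.append x 0 ⬝ᵥ M *ᵥ Fin.append x 0 =
      x ⬝ᵥ M.submatrix (Fin.castAdd s) (Fin.castAdd s) *ᵥ x := by
  simp [dotProduct, mulVec, Fin.sum_univ_add]

lemma rank_le_of_forall_isLastNonzero {K : Type*} [Field K] {m : Type*} {n : ℕ}
    (M : Matrix m (Fin n) K) {k : ℕ} (hkn : k ≤ n)
    (hker : ∀ j : Fin n, k ≤ j → ∃ w, M *ᵥ w = 0 ∧ IsLastNonzero w j) : M.rank ≤ k := by
  set S := span K (Set.range fun i : Fin k => M.col (Fin.castLE hkn i))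
  have hcol : ∀ j, M.col j ∈ S := by
    intro j
    induction j using WellFoundedLT.induction with
    | _ j ih =>
      by_cases hjk : (j : ℕ) < k
      · exact subset_span ⟨⟨j, hjk⟩, rfl⟩
      obtain ⟨w, hw, hwj, hwz⟩ := hker j (not_lt.1 hjk)
      have hsum : ∑ i, w i • M.col i = 0 := by
        rw [← hw]; ext a; simp [mulVec, dotProduct, Finset.sum_apply, mul_comm]
      have hj : w j • M.col j = -∑ i ∈ Finset.univ.erase j, w i • M.col i := by
        rw [eq_neg_iff_add_eq_zero, add_comm, Finset.sum_erase_add _ _ (Finset.mem_univ j), hsum]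
      have hmem : w j • M.col j ∈ S := by
        rw [hj]
        refine neg_mem (sum_mem fun i hi => ?_)
        rcases lt_or_gt_of_ne (Finset.ne_of_mem_erase hi) with hij | hij
        · exact S.smul_mem _ (ih i hij)
        · simp [hwz i hij]
      simpa [hwj] using S.smul_mem (w j)⁻¹ hmem
  have : Module.Finite K S := Module.Finite.span_of_finite K (Set.finite_range _)
  rw [rank_eq_finrank_span_cols]
  calc Module.finrank K (span K (Set.range M.col)) ≤ Module.finrank K S :=
        finrank_mono (span_le.2 (Set.range_subset_iff.2 hcol))
    _ ≤ k := (finrank_range_le_card _).trans (Fintype.card_fin k).le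

section Hankel

variable {R : Type*} (h : ℕ → R)

def hankel (n : ℕ) : Matrix (Fin n) (Fin n) R := of fun i j => h (i + j)

lemma transpose_hankel (n : ℕ) : (hankel h n)ᵀ = hankel h n := by
  ext i j; simp [hankel, add_comm]

variable [CommSemiring R]

lemma hankel_mulVec_cons_init_castSucc {m : ℕ} (v : Fin (m + 1) → R) (hv : v (Fin.last m) = 0)
    (i : Fin m) :
    (hankel h (m + 1) *ᵥ Fin.cons 0 (Fin.init v)) i.castSucc = (hankel h (m + 1) *ᵥ v) i.succ := by
  simp only [mulVec, dotProduct]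
  rw [Fin.sum_univ_succ, Fin.sum_univ_castSucc]
  simp [hankel, Fin.init, hv, add_assoc, add_comm 1]

variable {h}

lemma hankel_mulVec_cons_init_eq_zero {m : ℕ}
    (hrec : (hankel h (m + 1)).col (Fin.last m) ∈
      span R (Set.range fun j : Fin m => (hankel h (m + 1)).col j.castSucc))
    {v : Fin (m + 1) → R} (hv : hankel h (m + 1) *ᵥ v = 0) (hlast : v (Fin.last m) = 0) :
    hankel h (m + 1) *ᵥ Fin.cons 0 (Fin.init v) = 0 := by
  set w : Fin (m + 1) → R := Fin.cons 0 (Fin.init v)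
  have hrows : ∀ i : Fin m, (hankel h (m + 1) *ᵥ w) i.castSucc = 0 := fun i => by
    rw [hankel_mulVec_cons_init_castSucc h v hlast, hv]; rfl
  have hcol : ∀ i, (hankel h (m + 1) *ᵥ w) i = (hankel h (m + 1)).col i ⬝ᵥ w := fun i => by
    rw [col, transpose_hankel]; rfl
  -- the last column is a combination of columns whose dot products with `w` are the rows above
  have hspan : span R (Set.range fun j : Fin m => (hankel h (m + 1)).col j.castSucc) ≤
      LinearMap.ker ((dotProductBilin R R).flip w) :=
    span_le.2 (Set.range_subset_iff.2 fun j => by simpa [← hcol] using hrows j)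
  funext i
  induction i using Fin.lastCases with
  | last => simpa [hcol] using hspan hrec
  | cast i => exact hrows i

lemma exists_hankel_mulVec_eq_zero_isLastNonzero {m : ℕ}
    (hrec : (hankel h (m + 1)).col (Fin.last m) ∈
      span R (Set.range fun j : Fin m => (hankel h (m + 1)).col j.castSucc))
    {v : Fin (m + 1) → R} (hv : hankel h (m + 1) *ᵥ v = 0) {k : Fin (m + 1)}
    (hk : IsLastNonzero v k) (j : Fin (m + 1)) (hkj : k ≤ j) :
    ∃ w, hankel h (m + 1) *ᵥ w = 0 ∧ IsLastNonzero w j := by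
  induction j using Fin.induction with
  | zero => exact ⟨v, hv, le_antisymm hkj (Fin.zero_le k) ▸ hk⟩
  | succ j ih =>
    rcases hkj.eq_or_lt with rfl | hlt
    · exact ⟨v, hv, hk⟩
    obtain ⟨w, hw, hwj⟩ := ih (Fin.le_castSucc_iff.2 hlt)
    exact ⟨_, hankel_mulVec_cons_init_eq_zero hrec hw (hwj.2 _ (Fin.castSucc_lt_last j)),
      hwj.cons_init⟩

end Hankel

lemma rank_hankel_le_of_mulVec_eq_zero {K : Type*} [Field K] {h : ℕ → K} {n : ℕ} (hn : 0 < n)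
    (hrec : (fun i => hankel h n i ⟨n - 1, by omega⟩) ∈
      span K {c | ∃ j : Fin n, (j : ℕ) < n - 1 ∧ c = fun i => hankel h n i j})
    {v : Fin n → K} (hv : hankel h n *ᵥ v = 0) {k : Fin n} (hk : IsLastNonzero v k) :
    (hankel h n).rank ≤ k := by
  obtain ⟨m, rfl⟩ := Nat.exists_eq_add_one_of_ne_zero hn.ne'
  have hrange : {c | ∃ j : Fin (m + 1), (j : ℕ) < m + 1 - 1 ∧ c = fun i => hankel h (m + 1) i j} =
      Set.range fun j : Fin m => (hankel h (m + 1)).col j.castSucc := by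
    ext c
    constructor
    · rintro ⟨j, hj, rfl⟩
      exact ⟨⟨j, hj⟩, rfl⟩
    · rintro ⟨j, rfl⟩
      exact ⟨j.castSucc, j.isLt, rfl⟩
  rw [hrange] at hrec
  exact rank_le_of_forall_isLastNonzero _ k.is_le'
    (exists_hankel_mulVec_eq_zero_isLastNonzero hrec hv hk)

theorem stmt10 (n r : ℕ) (hn : 0 < n) (h : ℕ → ℝ)
    (H : Matrix (Fin n) (Fin n) ℝ)
    (hH : ∀ i j, H i j = h ((i : ℕ) + (j : ℕ)))
    (hpsd : H.PosSemidef) (hrank : H.rank = r)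
    (hdep : (fun i => H i ⟨n - 1, by omega⟩) ∈
      Submodule.span ℝ
        {w : Fin n → ℝ | ∃ j : Fin n, (j : ℕ) < n - 1 ∧ w = fun i => H i j}) :
    (Matrix.of fun i j : Fin r => h ((i : ℕ) + (j : ℕ))).PosDef := by
  obtain rfl : H = hankel h n := Matrix.ext hH
  obtain ⟨s, rfl⟩ := Nat.exists_eq_add_of_le (hrank ▸ (hankel h n).rank_le_width)
  have hsymm : (hankel h r)ᴴ = hankel h r := by
    rw [conjTranspose_eq_transpose_of_trivial, transpose_hankel]
  refine .of_dotProduct_mulVec_pos (M := hankel h r) hsymm fun x hx => ?_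
  have hquad : star x ⬝ᵥ hankel h r *ᵥ x =
      star (Fin.append x 0) ⬝ᵥ hankel h (r + s) *ᵥ Fin.append x 0 := by
    rw [star_trivial, star_trivial, append_zero_dotProduct_mulVec]
    rfl
  rw [hquad]
  refine (hpsd.dotProduct_mulVec_nonneg _).lt_of_ne' fun hzero => ?_
  have hker := (hpsd.dotProduct_mulVec_zero_iff _).1 hzero
  obtain ⟨k, hk⟩ := exists_isLastNonzero hx
  have hle := rank_hankel_le_of_mulVec_eq_zero hn hdep hker hk.append_zero
  rw [hrank, Fin.val_castAdd] at hle
  exact k.is_lt.not_ge hle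
end

section
/- Let m be odd and let H be an m-th order n-dimensional real tensor of the form H = Σ_{k=1}^{r-1} α_k v_k^{∘m} + α_r e_n^{∘m} with all α_k ≥ 0, where each v_k = [1, ξ_k, ..., ξ_k^{n-1}]ᵀ. Then every H-eigenvalue of H is nonnegative. -/
/-!
Contracting a rank-one tensor `u^{∘(d+1)}` with `x^d` gives `u (u ⬝ᵥ x)^d`, so the eigenvalue
equation of `H` reads `∑ₖ αₖ vₖ(i) (vₖ ⬝ᵥ x)^d + β eₙ(i) xₙ^d = λ xᵢ^d`. Every `vₖ` has first entry
`1` and `d` is even, so if `λ < 0` the first row forces `αₖ (vₖ ⬝ᵥ x)^d = 0` for all `k`. The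
remaining rows then say `β eₙ(i) xₙ^d = λ xᵢ^d`, with the left side `≥ 0` and the right side `≤ 0`,
hence `x = 0`.
-/

open Finset Matrix

section Contraction

variable {R ι : Type*} [CommSemiring R] [Fintype ι]

/-- The symmetric tensor `v^{∘m}`. -/
def outerPow (m : ℕ) (v : ι → R) : (Fin m → ι) → R := fun i => ∏ j, v (i j)

/-- The `i₁`-th entry of `T x^d` for a tensor `T` of order `d + 1`, as a linear function of `T`. -/
def contractPow (d : ℕ) (x : ι → R) (i₁ : ι) : ((Fin (d + 1) → ι) → R) →ₗ[R] R where
  toFun T := ∑ i : Fin d → ι, T (Fin.cons i₁ i) * ∏ j, x (i j)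
  map_add' S T := by simp only [Pi.add_apply, add_mul, sum_add_distrib]
  map_smul' c T := by simp only [Pi.smul_apply, smul_eq_mul, mul_assoc, mul_sum, RingHom.id_apply]

theorem contractPow_outerPow (d : ℕ) (v x : ι → R) (i₁ : ι) :
    contractPow d x i₁ (outerPow (d + 1) v) = v i₁ * (v ⬝ᵥ x) ^ d := by
  simp only [contractPow, outerPow, LinearMap.coe_mk, AddHom.coe_mk, Fin.prod_univ_succ,
    Fin.cons_zero, Fin.cons_succ, mul_assoc, ← mul_sum, ← prod_mul_distrib, dotProduct,
    Fintype.sum_pow]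

end Contraction

theorem nonneg_of_eigen_sum_outerPow {ι κ : Type*} [Fintype ι] [Fintype κ] {d : ℕ} (hd : Even d)
    {c : κ → ℝ} {u : κ → ι → ℝ} {β : ℝ} {e : ι → ℝ} {i₀ : ι}
    (hc : ∀ k, 0 ≤ c k) (hu : ∀ k, 0 < u k i₀) (hβ : 0 ≤ β) (he : ∀ i, 0 ≤ e i)
    {lam : ℝ} {x : ι → ℝ} (hx : x ≠ 0)
    (heig : ∀ i, ∑ k, c k * u k i * (u k ⬝ᵥ x) ^ d + β * e i * (e ⬝ᵥ x) ^ d = lam * x i ^ d) :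
    0 ≤ lam := by
  by_contra! hlam
  have hrhs : ∀ i, lam * x i ^ d ≤ 0 := fun i =>
    mul_nonpos_of_nonpos_of_nonneg hlam.le (hd.pow_nonneg _)
  have hlast : ∀ i, 0 ≤ β * e i * (e ⬝ᵥ x) ^ d := fun i =>
    mul_nonneg (mul_nonneg hβ (he i)) (hd.pow_nonneg _)
  have hterm : ∀ k, 0 ≤ c k * u k i₀ * (u k ⬝ᵥ x) ^ d := fun k =>
    mul_nonneg (mul_nonneg (hc k) (hu k).le) (hd.pow_nonneg _)
  have hsum : ∑ k, c k * u k i₀ * (u k ⬝ᵥ x) ^ d = 0 := by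
    linarith [heig i₀, hrhs i₀, hlast i₀, sum_nonneg fun k (_ : k ∈ univ) => hterm k]
  have hzero : ∀ k, c k * (u k ⬝ᵥ x) ^ d = 0 := fun k => by
    have := (sum_eq_zero_iff_of_nonneg fun k _ => hterm k).1 hsum k (mem_univ k)
    rw [mul_right_comm] at this
    exact (mul_eq_zero.1 this).resolve_right (hu k).ne'
  obtain ⟨i, hi⟩ := Function.ne_iff.1 hx
  have hrow : β * e i * (e ⬝ᵥ x) ^ d = lam * x i ^ d := by
    rw [← heig i, right_eq_add]
    exact sum_eq_zero fun k _ => by rw [mul_right_comm, hzero k, zero_mul]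
  have : lam * x i ^ d = 0 := le_antisymm (hrhs i) (hrow ▸ hlast i)
  exact (mul_ne_zero hlam.ne (pow_ne_zero d hi)) this

theorem stmt15 (d n r : ℕ) (hd : Even d) (hn : 0 < n)
    (ξ : Fin (r - 1) → ℝ) (α : Fin (r - 1) → ℝ) (β : ℝ)
    (hα : ∀ k, 0 ≤ α k) (hβ : 0 ≤ β)
    (T : (Fin (d + 1) → Fin n) → ℝ)
    (hT : ∀ i, T i = (∑ k, α k * ∏ j, ξ k ^ ((i j : ℕ)))
        + β * ∏ j, (if (i j : ℕ) = n - 1 then (1 : ℝ) else 0))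
    (lam : ℝ) (x : Fin n → ℝ) (hx : x ≠ 0)
    (heig : ∀ i₁ : Fin n,
      ∑ i : Fin d → Fin n, T (Fin.cons i₁ i) * ∏ j, x (i j) = lam * x i₁ ^ d) :
    0 ≤ lam := by
  set v : Fin (r - 1) → Fin n → ℝ := fun k a => ξ k ^ (a : ℕ)
  set e : Fin n → ℝ := fun a => if (a : ℕ) = n - 1 then 1 else 0
  have hT' : T = ∑ k, α k • outerPow (d + 1) (v k) + β • outerPow (d + 1) e := by
    funext i
    simp only [hT, Pi.add_apply, Finset.sum_apply, Pi.smul_apply, smul_eq_mul, outerPow, v, e]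
  refine nonneg_of_eigen_sum_outerPow (u := v) (e := e) (i₀ := ⟨0, hn⟩) hd hα
    (fun k => by simp [v]) hβ (fun a => by positivity) hx fun i₁ => ?_
  rw [← heig i₁]
  change _ = contractPow d x i₁ T
  simp only [hT', map_add, map_sum, map_smul, contractPow_outerPow, smul_eq_mul, mul_assoc]
end

section
/- An m-th order N-dimensional anti-circulant tensor C with compressed generating vector c ∈ ℂ^N is diagonalized by the N×N Fourier matrix: C = D ×₁ F_N ×₂ F_N ··· ×_m F_N, where D is the diagonal tensor whose diagonal entries are F_N* c / N (the inverse discrete Fourier transform of c). -/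
/-!
Since `∏ⱼ exp(2πi t iⱼ / N) = exp(2πi t S / N)` with `S = ∑ⱼ iⱼ`, the right-hand side is the
discrete Fourier transform of the inverse transform `d` of `c`, evaluated at `S`. Orthogonality of
the `N`-th roots of unity turns this into `c (S mod N) = C i`.
-/

open Complex Finset
open scoped Real

theorem IsPrimitiveRoot.sum_zpow_pow_eq_ite {K : Type*} [Field K] {ζ : K} {N : ℕ}
    (hζ : IsPrimitiveRoot ζ N) (k : ℤ) :
    ∑ t ∈ range N, (ζ ^ k) ^ t = if (N : ℤ) ∣ k then (N : K) else 0 := by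
  split_ifs with hk
  · simp [(hζ.zpow_eq_one_iff_dvd k).2 hk]
  · have hζk : (ζ ^ k) ^ N = 1 := by
      rw [← zpow_natCast, ← zpow_mul, mul_comm, zpow_mul, zpow_natCast, hζ.pow_eq_one, one_zpow]
    rw [geom_sum_eq (mt (hζ.zpow_eq_one_iff_dvd k).1 hk), hζk, sub_self, zero_div]

theorem sum_exp_mul_exp_neg_eq_ite {N : ℕ} (hN : N ≠ 0) (a b : ℕ) :
    ∑ t : Fin N, exp (2 * π * I * (t : ℕ) * a / N) * exp (-(2 * π * I * (t : ℕ) * b / N))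
      = if b ≡ a [MOD N] then (N : ℂ) else 0 := by
  have hterm : ∀ t : ℕ, exp (2 * π * I * t * a / N) * exp (-(2 * π * I * t * b / N))
      = (exp (2 * π * I / N) ^ ((a : ℤ) - b)) ^ t := by
    intro t
    rw [← exp_add, ← exp_int_mul, ← exp_nat_mul]
    congr 1
    push_cast
    ring
  simp_rw [Fin.sum_univ_eq_sum_range (fun t => exp (2 * π * I * t * a / N) *
    exp (-(2 * π * I * t * b / N))), hterm, (isPrimitiveRoot_exp N hN).sum_zpow_pow_eq_ite,
    Nat.modEq_iff_dvd]

theorem sum_invDFT_mul_exp_eq {N : ℕ} (hN : 0 < N) (c : Fin N → ℂ) (S : ℕ) :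
    ∑ t : Fin N, ((1 / (N : ℂ)) * ∑ s : Fin N,
        exp (-(2 * π * I * (t : ℕ) * (s : ℕ) / N)) * c s) * exp (2 * π * I * (t : ℕ) * S / N)
      = c ⟨S % N, Nat.mod_lt _ hN⟩ := by
  have hmod : ∀ s : Fin N, (s : ℕ) ≡ S [MOD N] ↔ s = ⟨S % N, Nat.mod_lt _ hN⟩ := by
    intro s
    rw [Nat.ModEq, Nat.mod_eq_of_lt s.isLt, Fin.ext_iff]
  calc _ = (1 / (N : ℂ)) * ∑ s : Fin N, c s * ∑ t : Fin N,
        exp (2 * π * I * (t : ℕ) * S / N) * exp (-(2 * π * I * (t : ℕ) * (s : ℕ) / N)) := by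
        simp_rw [mul_sum, sum_mul]
        rw [sum_comm]
        refine sum_congr rfl fun s _ => sum_congr rfl fun t _ => by ring
    _ = c ⟨S % N, Nat.mod_lt _ hN⟩ := by
        simp_rw [sum_exp_mul_exp_neg_eq_ite hN.ne', hmod, mul_ite, mul_zero, sum_ite_eq',
          mem_univ, if_true]
        field_simp [Nat.cast_ne_zero.2 hN.ne']

theorem stmt18 (m N : ℕ) (hN : 0 < N) (c : Fin N → ℂ)
    (C : (Fin m → Fin N) → ℂ)
    (hC : ∀ i, C i = c ⟨(∑ j, (i j : ℕ)) % N, Nat.mod_lt _ hN⟩)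
    (d : Fin N → ℂ)
    (hd : ∀ t, d t = (1 / (N : ℂ)) * ∑ s : Fin N,
      Complex.exp (-(2 * Real.pi * Complex.I * ((t : ℕ) : ℂ) * ((s : ℕ) : ℂ) / (N : ℂ))) * c s) :
    ∀ i : Fin m → Fin N,
      C i = ∑ t : Fin N, d t *
        ∏ j, Complex.exp (2 * Real.pi * Complex.I * ((t : ℕ) : ℂ) * (((i j : ℕ)) : ℂ) / (N : ℂ)) := by
  intro i
  have hprod : ∀ t : Fin N, ∏ j, exp (2 * π * I * (t : ℕ) * (i j : ℕ) / N)
      = exp (2 * π * I * (t : ℕ) * (∑ j, (i j : ℕ) : ℕ) / N) := by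
    intro t
    rw [← exp_sum, Nat.cast_sum, mul_sum, sum_div]
  simp_rw [hC, hd, hprod]
  exact (sum_invDFT_mul_exp_eq hN c _).symm
end
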